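/- Define the Bernoulli-Catalan polynomials Q_n ∈ ℚ[z] by Q_0 = 0, Q_1(z) = z - 1/2, and Q_n = 𝒦(∑_{k=1}^{n-1} Q_k Q_{n-k}) for n ≥ 2, where 𝒦 = 2∑_{r≥1} ((2^{2r}-1)/(2r)!) B_{2r} (d/dz)^{2r-2} acting on polynomials. Then Q_n satisfies the symmetry Q_n(1-z) = (-1)^n Q_n(z) for all n. -/
import Mathlib


open Polynomial Finset

/-- The operator `𝒦 = 2 ∑_{r≥1} ((2^{2r}-1)/(2r)!) B_{2r} (d/dz)^{2r-2}` acting on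
polynomials (the sum is finite on any polynomial, since high derivatives vanish). -/
noncomputable def KOp (P : Polynomial ℚ) : Polynomial ℚ :=
  2 * ∑ r ∈ Finset.Icc 1 (P.natDegree + 1),
    Polynomial.C ((((2 : ℚ) ^ (2 * r) - 1) / (Nat.factorial (2 * r))) * _root_.bernoulli (2 * r)) *
      (Polynomial.derivative^[2 * r - 2] P)

lemma deriv_iter_C_mul (a : ℚ) (P : Polynomial ℚ) (m : ℕ) :
    Polynomial.derivative^[m] (C a * P) = C a * Polynomial.derivative^[m] P := by
  induction m generalizing P with
  | zero => simp
  | succ k ih => rw [Function.iterate_succ_apply, derivative_C_mul, ih, Function.iterate_succ_apply]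

lemma deriv_comp_reflect (P : Polynomial ℚ) (m : ℕ) :
    Polynomial.derivative^[m] (P.comp (1 - X)) =
      C ((-1 : ℚ) ^ m) * (Polynomial.derivative^[m] P).comp (1 - X) := by
  induction m generalizing P with
  | zero => simp
  | succ m ih =>
      rw [Function.iterate_succ_apply, derivative_comp]
      have h1 : derivative (1 - X : Polynomial ℚ) = -1 := by simp
      rw [h1, show (-1 : Polynomial ℚ) * (derivative P).comp (1 - X) =
        C (-1 : ℚ) * (derivative P).comp (1 - X) by simp]
      rw [deriv_iter_C_mul, ih, Function.iterate_succ_apply]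
      rw [← mul_assoc, ← C_mul]
      congr 2
      ring

lemma KOp_symm (P : Polynomial ℚ) (ε : ℚ)
    (h : ∀ z : ℚ, P.eval (1 - z) = ε * P.eval z) :
    ∀ z : ℚ, (KOp P).eval (1 - z) = ε * (KOp P).eval z := by
  have hcomp : P.comp (1 - X) = C ε * P := by
    apply Polynomial.funext
    intro z
    simp [eval_comp, h z]
  have hder : ∀ m : ℕ, Even m → ∀ z : ℚ,
      (Polynomial.derivative^[m] P).eval (1 - z) = ε * (Polynomial.derivative^[m] P).eval z := by
    intro m hm z
    have h1 := deriv_comp_reflect P m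
    rw [hcomp, deriv_iter_C_mul, hm.neg_one_pow, map_one, one_mul] at h1
    have := congrArg (Polynomial.eval z) h1.symm
    simpa [eval_comp] using this
  intro z
  simp only [KOp, eval_mul, eval_ofNat, eval_finset_sum, eval_C]
  have key : ∀ r ∈ Finset.Icc 1 (P.natDegree + 1),
      (((2 : ℚ) ^ (2 * r) - 1) / (Nat.factorial (2 * r)) * _root_.bernoulli (2 * r)) *
        (Polynomial.derivative^[2 * r - 2] P).eval (1 - z) =
      ε * ((((2 : ℚ) ^ (2 * r) - 1) / (Nat.factorial (2 * r)) * _root_.bernoulli (2 * r)) *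
        (Polynomial.derivative^[2 * r - 2] P).eval z) := by
    intro r hr
    obtain ⟨hr1, _⟩ := Finset.mem_Icc.mp hr
    have h2r : Even (2 * r - 2) := by
      have : 2 * r - 2 = 2 * (r - 1) := by omega
      rw [this]; exact even_two_mul _
    rw [hder _ h2r z]; ring
  rw [Finset.sum_congr rfl key, ← Finset.mul_sum]
  ring

/-- The Bernoulli-Catalan polynomials `Q_0 = 0`, `Q_1 = z - 1/2`,
`Q_n = 𝒦(∑_{k=1}^{n-1} Q_k Q_{n-k})` satisfy `Q_n(1-z) = (-1)^n Q_n(z)`. -/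
theorem bernoulliCatalan_symmetry (Q : ℕ → Polynomial ℚ)
    (h0 : Q 0 = 0) (h1 : Q 1 = X - C (1 / 2))
    (hrec : ∀ n : ℕ, 2 ≤ n → Q n = KOp (∑ k ∈ Finset.Ico 1 n, Q k * Q (n - k))) :
    ∀ (n : ℕ) (z : ℚ), (Q n).eval (1 - z) = (-1 : ℚ) ^ n * (Q n).eval z := by
  intro n
  induction n using Nat.strong_induction_on with
  | _ n ih =>
    intro z
    match n, ih with
    | 0, _ => simp [h0]
    | 1, _ => simp [h1]; ring
    | (m + 2), ih =>
      set n := m + 2 with hn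
      have hS : ∀ w : ℚ, (∑ k ∈ Finset.Ico 1 n, Q k * Q (n - k)).eval (1 - w) =
          (-1 : ℚ) ^ n * (∑ k ∈ Finset.Ico 1 n, Q k * Q (n - k)).eval w := by
        intro w
        simp only [eval_finset_sum, eval_mul, Finset.mul_sum]
        apply Finset.sum_congr rfl
        intro k hk
        obtain ⟨hk1, hk2⟩ := Finset.mem_Ico.mp hk
        rw [ih k (by omega) w, ih (n - k) (by omega) w]
        have hpow : (-1 : ℚ) ^ k * (-1 : ℚ) ^ (n - k) = (-1 : ℚ) ^ n := by
          rw [← pow_add]; congr 1; omega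
        rw [← hpow]; ring
      rw [hrec n (by omega)]
      exact KOp_symm _ _ hS z
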